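/- arXiv:1302.6066 — 2 statements merged into one kernel-verified Lean document; each statement's English description precedes it below -/
import Mathlib

section
/- Let q₁, q₂, q₃, q₄ ∈ ℝ³ be non-collinear points and suppose there exists λ ≠ 0 and c ∈ ℝ³ such that ν(q₄,q₃,q₂) = λ q₁ + c, ν(q₄,q₁,q₃) = λ q₂ + c, ν(q₄,q₂,q₁) = λ q₃ + c, and ν(q₁,q₂,q₃) = λ q₄ + c. Then the tetrahedron (q₁,q₂,q₃,q₄) is regular: all six edge lengths ‖q_i − q_j‖ for i ≠ j are equal. -/
open scoped RealInnerProductSpace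

noncomputable section

/-- Euclidean 3-space with the standard inner product. -/
abbrev E3 : Type := EuclideanSpace ℝ (Fin 3)

/-- The cross product on `ℝ³`. -/
def cross (a b : E3) : E3 :=
  WithLp.toLp 2 ![a 1 * b 2 - a 2 * b 1, a 2 * b 0 - a 0 * b 2, a 0 * b 1 - a 1 * b 0]

/-- `ν(a,b,c)` for a 3-cycle. -/
def nu3 (a b c : E3) : E3 := cross a b + cross b c + cross c a

/-- `ν(a,b,c,d)` for a 4-cycle. -/
def nu4 (a b c d : E3) : E3 := cross a b + cross b c + cross c d + cross d a

/-- `ν(a,b,c,d,e)` for a 5-cycle. -/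
def nu5 (a b c d e : E3) : E3 :=
  cross a b + cross b c + cross c d + cross d e + cross e a

/-- `ν(a,b,c,d,e,f)` for a 6-cycle. -/
def nu6 (a b c d e f : E3) : E3 :=
  cross a b + cross b c + cross c d + cross d e + cross e f + cross f a

/-- The signed volume of a tetrahedron. -/
def tvol (p₁ p₂ p₃ p₄ : E3) : ℝ :=
  (1 / 6) * ⟪cross (p₂ - p₁) (p₃ - p₁), p₄ - p₁⟫

/-- The point `(x, y, z)` of `ℝ³`. -/
def v3 (x y z : ℝ) : E3 := WithLp.toLp 2 ![x, y, z]

/-!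
Let `νᵢ` be the `ν` of the face opposite `qᵢ` in the given system. Subtracting two of the
equations gives `νᵢ - νⱼ = λ (qᵢ - qⱼ)`, so `λ ‖qᵢ - qⱼ‖² = ⟪νᵢ - νⱼ, qᵢ - qⱼ⟫`. Since `νᵢ` is
twice the oriented area vector of that face, the right-hand side is `12` times the signed volume
of the tetrahedron for the edge `q₁q₂`; the system is invariant under the even relabellings of
the vertices, which act transitively on the ordered edges, so the same holds for every edge.
As `λ ≠ 0`, all edges have the same length.
-/

lemma inner_cross (a b p : E3) :
    ⟪cross a b, p⟫ = (a 1 * b 2 - a 2 * b 1) * p 0 + (a 2 * b 0 - a 0 * b 2) * p 1 +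
      (a 0 * b 1 - a 1 * b 0) * p 2 := by
  simp [cross, PiLp.inner_apply, Fin.sum_univ_three, mul_comm]

lemma nu3_rotate_left (a b c : E3) : nu3 b c a = nu3 a b c := by
  simp only [nu3]; abel

lemma nu3_rotate_right (a b c : E3) : nu3 c a b = nu3 a b c := by
  simp only [nu3]; abel

lemma tvol_rotate_tail (a b c d : E3) : tvol a c d b = tvol a b c d := by
  simp only [tvol, inner_cross, PiLp.sub_apply]; ring

lemma tvol_swap_swap (a b c d : E3) : tvol b a d c = tvol a b c d := by
  simp only [tvol, inner_cross, PiLp.sub_apply]; ring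

lemma inner_sub_nu3_sub_nu3 (a b c d : E3) :
    ⟪nu3 d c b - nu3 d a c, a - b⟫ = 12 * tvol a b c d := by
  simp only [nu3, tvol, inner_sub_left, inner_add_left, inner_cross, PiLp.sub_apply]; ring

lemma mul_norm_sub_sq_eq_tvol {a b c d p : E3} {lam : ℝ}
    (ha : nu3 d c b = lam • a + p) (hb : nu3 d a c = lam • b + p) :
    lam * ‖a - b‖ ^ 2 = 12 * tvol a b c d := by
  rw [← inner_sub_nu3_sub_nu3, ha, hb, add_sub_add_right_eq_sub, ← smul_sub,
    real_inner_smul_left, real_inner_self_eq_norm_sq]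

theorem optimal_tetrahedron_is_regular_general (q₁ q₂ q₃ q₄ : E3)
    (lam : ℝ) (hlam : lam ≠ 0) (c : E3)
    (h₁ : nu3 q₄ q₃ q₂ = lam • q₁ + c)
    (h₂ : nu3 q₄ q₁ q₃ = lam • q₂ + c)
    (h₃ : nu3 q₄ q₂ q₁ = lam • q₃ + c)
    (h₄ : nu3 q₁ q₂ q₃ = lam • q₄ + c) :
    ‖q₁ - q₂‖ = ‖q₁ - q₃‖ ∧ ‖q₁ - q₂‖ = ‖q₁ - q₄‖ ∧ ‖q₁ - q₂‖ = ‖q₂ - q₃‖ ∧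
      ‖q₁ - q₂‖ = ‖q₂ - q₄‖ ∧ ‖q₁ - q₂‖ = ‖q₃ - q₄‖ := by
  have e₁₂ := mul_norm_sub_sq_eq_tvol h₁ h₂
  have e₁₃ := mul_norm_sub_sq_eq_tvol (c := q₄) (d := q₂)
    (by simpa only [nu3_rotate_left, nu3_rotate_right] using h₁)
    (by simpa only [nu3_rotate_left, nu3_rotate_right] using h₃)
  have e₁₄ := mul_norm_sub_sq_eq_tvol (c := q₂) (d := q₃)
    (by simpa only [nu3_rotate_left, nu3_rotate_right] using h₁)
    (by simpa only [nu3_rotate_left, nu3_rotate_right] using h₄)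
  have e₂₃ := mul_norm_sub_sq_eq_tvol (c := q₁) (d := q₄) h₂ h₃
  have e₂₄ := mul_norm_sub_sq_eq_tvol (c := q₃) (d := q₁)
    (by simpa only [nu3_rotate_left, nu3_rotate_right] using h₂) h₄
  have e₃₄ := mul_norm_sub_sq_eq_tvol (c := q₁) (d := q₂)
    (by simpa only [nu3_rotate_left, nu3_rotate_right] using h₃)
    (by simpa only [nu3_rotate_left, nu3_rotate_right] using h₄)
  rw [tvol_rotate_tail] at e₁₃
  rw [tvol_rotate_tail, tvol_rotate_tail] at e₁₄
  rw [tvol_rotate_tail, tvol_rotate_tail, tvol_swap_swap] at e₂₃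
  rw [tvol_rotate_tail, tvol_swap_swap] at e₂₄
  rw [tvol_rotate_tail, tvol_rotate_tail, tvol_swap_swap, tvol_rotate_tail] at e₃₄
  have norm_eq {u v : E3} (hu : lam * ‖u‖ ^ 2 = 12 * tvol q₁ q₂ q₃ q₄)
      (hv : lam * ‖v‖ ^ 2 = 12 * tvol q₁ q₂ q₃ q₄) : ‖u‖ = ‖v‖ :=
    (pow_left_inj₀ (norm_nonneg u) (norm_nonneg v) two_ne_zero).1
      (mul_left_cancel₀ hlam (hu.trans hv.symm))
  exact ⟨norm_eq e₁₂ e₁₃, norm_eq e₁₂ e₁₄, norm_eq e₁₂ e₂₃, norm_eq e₁₂ e₂₄, norm_eq e₁₂ e₃₄⟩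

theorem optimal_tetrahedron_is_regular (q₁ q₂ q₃ q₄ : E3)
    (hnc : ¬ Collinear ℝ ({q₁, q₂, q₃, q₄} : Set E3))
    (lam : ℝ) (hlam : lam ≠ 0) (c : E3)
    (h₁ : nu3 q₄ q₃ q₂ = lam • q₁ + c)
    (h₂ : nu3 q₄ q₁ q₃ = lam • q₂ + c)
    (h₃ : nu3 q₄ q₂ q₁ = lam • q₃ + c)
    (h₄ : nu3 q₁ q₂ q₃ = lam • q₄ + c) :
    ‖q₁ - q₂‖ = ‖q₁ - q₃‖ ∧ ‖q₁ - q₂‖ = ‖q₁ - q₄‖ ∧ ‖q₁ - q₂‖ = ‖q₂ - q₃‖ ∧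
      ‖q₁ - q₂‖ = ‖q₂ - q₄‖ ∧ ‖q₁ - q₂‖ = ‖q₃ - q₄‖ :=
  optimal_tetrahedron_is_regular_general q₁ q₂ q₃ q₄ lam hlam c h₁ h₂ h₃ h₄
end
end

section
/- Let q₁,…,q₆ ∈ ℝ³, not all equal, and suppose there exist λ ≠ 0 and c ∈ ℝ³ with X_i(q) = λ q_i + c for i = 1,…,6, where X is the octahedron gradient field. Then (q₁,…,q₆) is a regular octahedron: there exist r > 0, an orthogonal linear map R of ℝ³, and b ∈ ℝ³ such that q₁ = r·R(0,0,1) + b, q₂ = r·R(1,0,0) + b, q₃ = r·R(0,1,0) + b, q₄ = r·R(−1,0,0) + b, q₅ = r·R(0,−1,0) + b, and q₆ = r·R(0,0,−1) + b. -/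
/-!
The link of every vertex is a 4-cycle, `ν` of a 4-cycle is the cross product of its diagonals,
and antipodal vertices have the same link traversed in opposite directions, so `X` takes
opposite values at them. Adding the equations at antipodal vertices shows that the diagonals
`u = q₁ - q₆`, `v = q₂ - q₄`, `w = q₃ - q₅` share their midpoint; subtracting them gives
`v × w = μ u`, `w × u = μ v`, `u × v = μ w` with `μ = 3λ`. Such a triple is zero (excluded since
the points are not all equal) or pairwise orthogonal with `‖u‖ = ‖v‖ = ‖w‖ = |μ|`, by expanding
`a × (c × a)`.
-/

open scoped RealInnerProductSpace

noncomputable section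

open Matrix in
lemma cross_eq_crossProduct (a b : E3) :
    cross a b = WithLp.toLp 2 (a.ofLp ⨯₃ b.ofLp) := by
  ext i; fin_cases i <;> simp [cross, cross_apply]

lemma cross_swap (a b : E3) : cross b a = -cross a b := by
  rw [cross_eq_crossProduct, cross_eq_crossProduct, ← cross_anticomm, WithLp.toLp_neg]

lemma cross_neg_right (a b : E3) : cross a (-b) = -cross a b := by
  rw [cross_eq_crossProduct, cross_eq_crossProduct, WithLp.ofLp_neg, map_neg, WithLp.toLp_neg]

lemma cross_smul_right (r : ℝ) (a b : E3) : cross a (r • b) = r • cross a b := by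
  simp [cross_eq_crossProduct]

lemma cross_zero_left (a : E3) : cross 0 a = 0 := by
  simp [cross_eq_crossProduct]

lemma cross_zero_right (a : E3) : cross a 0 = 0 := by
  simp [cross_eq_crossProduct]

lemma inner_self_cross (a b : E3) : ⟪a, cross a b⟫ = 0 := by
  simp [cross_eq_crossProduct, EuclideanSpace.inner_eq_star_dotProduct, dotProduct_comm]

lemma inner_cross_self (a b : E3) : ⟪b, cross a b⟫ = 0 := by
  simp [cross_eq_crossProduct, EuclideanSpace.inner_eq_star_dotProduct, dotProduct_comm]

lemma cross_cross_right (a b c : E3) : cross a (cross b c) = ⟪a, c⟫ • b - ⟪a, b⟫ • c := by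
  simp [cross_eq_crossProduct, EuclideanSpace.inner_eq_star_dotProduct,
    cross_cross_eq_smul_sub_smul', dotProduct_comm]

lemma nu4_eq_cross (a b c d : E3) : nu4 a b c d = cross (a - c) (b - d) := by
  ext i; fin_cases i <;> simp [nu4, cross] <;> ring

lemma nu4_reverse (a b c d : E3) : nu4 a d c b = -nu4 a b c d := by
  rw [nu4_eq_cross, nu4_eq_cross, ← neg_sub b d, cross_neg_right]

section CyclicCross

variable {μ : ℝ} {a b c : E3}

lemma inner_eq_zero_of_cross_eq_smul (hμ : μ ≠ 0) (h : cross a b = μ • c) :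
    ⟪a, c⟫ = 0 ∧ ⟪b, c⟫ = 0 := by
  have ha := inner_self_cross a b
  have hb := inner_cross_self a b
  rw [h, real_inner_smul_right] at ha hb
  exact ⟨(mul_eq_zero.1 ha).resolve_left hμ, (mul_eq_zero.1 hb).resolve_left hμ⟩

lemma norm_eq_abs_of_cross_eq_smul (hμ : μ ≠ 0) (hab : cross a b = μ • c)
    (hca : cross c a = μ • b) (hc : c ≠ 0) : ‖a‖ = |μ| := by
  have hac : ⟪a, c⟫ = 0 := (inner_eq_zero_of_cross_eq_smul hμ hab).1
  have key : ‖a‖ ^ 2 • c = μ ^ 2 • c :=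
    calc ‖a‖ ^ 2 • c = cross a (cross c a) := by
          rw [cross_cross_right, hac, zero_smul, sub_zero, real_inner_self_eq_norm_sq]
      _ = μ ^ 2 • c := by rw [hca, cross_smul_right, hab, smul_smul, sq]
  rw [← abs_norm, ← sq_eq_sq_iff_abs_eq_abs]
  exact smul_left_injective ℝ hc key

lemma eq_zero_of_cross_cyclic (hμ : μ ≠ 0) (hbc : cross b c = μ • a)
    (hca : cross c a = μ • b) (hc : c = 0) : a = 0 ∧ b = 0 := by
  subst hc
  rw [cross_zero_right] at hbc
  rw [cross_zero_left] at hca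
  exact ⟨(smul_eq_zero.1 hbc.symm).resolve_left hμ, (smul_eq_zero.1 hca.symm).resolve_left hμ⟩

lemma orthonormal_of_cross_cyclic (hμ : μ ≠ 0) (hab : cross a b = μ • c)
    (hbc : cross b c = μ • a) (hca : cross c a = μ • b) (hc : c ≠ 0) :
    Orthonormal ℝ (|μ|⁻¹ • ![a, b, c]) := by
  have hμ' : |μ| ≠ 0 := abs_ne_zero.2 hμ
  have ha := norm_eq_abs_of_cross_eq_smul hμ hab hca hc
  have hb := norm_eq_abs_of_cross_eq_smul hμ hbc hab (norm_ne_zero_iff.1 (ha ▸ hμ'))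
  have hc' := norm_eq_abs_of_cross_eq_smul hμ hca hbc (norm_ne_zero_iff.1 (hb ▸ hμ'))
  have hab' := (inner_eq_zero_of_cross_eq_smul hμ hca).2
  have hbc' := (inner_eq_zero_of_cross_eq_smul hμ hab).2
  have hca' := (inner_eq_zero_of_cross_eq_smul hμ hbc).2
  refine ⟨fun i => ?_, fun i j hij => ?_⟩
  · fin_cases i <;> simp [norm_smul, ha, hb, hc', hμ']
  · fin_cases i <;> fin_cases j <;>
      simp_all [real_inner_smul_right, real_inner_comm]

end CyclicCross

lemma exists_linearIsometryEquiv_v3 {f : Fin 3 → E3} (hf : Orthonormal ℝ f) :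
    ∃ R : E3 ≃ₗᵢ[ℝ] E3, ∀ x y z, R (v3 x y z) = x • f 0 + y • f 1 + z • f 2 := by
  let B := OrthonormalBasis.mk hf
    (hf.linearIndependent.span_eq_top_of_card_eq_finrank (by simp)).ge
  refine ⟨B.repr.symm, fun x y z => ?_⟩
  rw [← B.sum_repr_symm, Fin.sum_univ_three]
  simp [B, v3]

lemma exists_regular_octahedron_of_diagonals {q₁ q₂ q₃ q₄ q₅ q₆ : E3} {s : ℝ} (hs : 0 < s)
    (h₂₄ : q₂ + q₄ = q₁ + q₆) (h₃₅ : q₃ + q₅ = q₁ + q₆)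
    (hdiag : Orthonormal ℝ (s • ![q₂ - q₄, q₃ - q₅, q₁ - q₆])) :
    ∃ (r : ℝ) (_ : 0 < r) (R : E3 ≃ₗᵢ[ℝ] E3) (b : E3),
      q₁ = r • R (v3 0 0 1) + b ∧
      q₂ = r • R (v3 1 0 0) + b ∧
      q₃ = r • R (v3 0 1 0) + b ∧
      q₄ = r • R (v3 (-1) 0 0) + b ∧
      q₅ = r • R (v3 0 (-1) 0) + b ∧
      q₆ = r • R (v3 0 0 (-1)) + b := by
  obtain ⟨R, hR⟩ := exists_linearIsometryEquiv_v3 hdiag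
  have hs' : s * s⁻¹ = 1 := mul_inv_cancel₀ hs.ne'
  refine ⟨(2 * s)⁻¹, by positivity, R, (2 : ℝ)⁻¹ • (q₁ + q₆), ?_⟩
  simp only [hR, Pi.smul_apply, Matrix.cons_val_zero, Matrix.cons_val_one, Matrix.cons_val_two,
    Matrix.head_cons, Matrix.tail_cons]
  refine ⟨?_, ?_, ?_, ?_, ?_, ?_⟩
  · linear_combination (norm := module) -hs' • (2⁻¹ : ℝ) • (q₁ - q₆)
  · linear_combination (norm := module) (2⁻¹ : ℝ) • h₂₄ - hs' • (2⁻¹ : ℝ) • (q₂ - q₄)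
  · linear_combination (norm := module) (2⁻¹ : ℝ) • h₃₅ - hs' • (2⁻¹ : ℝ) • (q₃ - q₅)
  · linear_combination (norm := module) (2⁻¹ : ℝ) • h₂₄ + hs' • (2⁻¹ : ℝ) • (q₂ - q₄)
  · linear_combination (norm := module) (2⁻¹ : ℝ) • h₃₅ + hs' • (2⁻¹ : ℝ) • (q₃ - q₅)
  · linear_combination (norm := module) hs' • (2⁻¹ : ℝ) • (q₁ - q₆)

theorem optimal_octahedron_is_regular (q₁ q₂ q₃ q₄ q₅ q₆ : E3)
    (hne : ¬ (q₁ = q₂ ∧ q₁ = q₃ ∧ q₁ = q₄ ∧ q₁ = q₅ ∧ q₁ = q₆))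
    (lam : ℝ) (hlam : lam ≠ 0) (c : E3)
    (h₁ : (6 : ℝ)⁻¹ • nu4 q₂ q₃ q₄ q₅ = lam • q₁ + c)
    (h₂ : (6 : ℝ)⁻¹ • nu4 q₁ q₅ q₆ q₃ = lam • q₂ + c)
    (h₃ : (6 : ℝ)⁻¹ • nu4 q₁ q₂ q₆ q₄ = lam • q₃ + c)
    (h₄ : (6 : ℝ)⁻¹ • nu4 q₁ q₃ q₆ q₅ = lam • q₄ + c)
    (h₅ : (6 : ℝ)⁻¹ • nu4 q₁ q₄ q₆ q₂ = lam • q₅ + c)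
    (h₆ : (6 : ℝ)⁻¹ • nu4 q₂ q₅ q₄ q₃ = lam • q₆ + c) :
    ∃ (r : ℝ) (_ : 0 < r) (R : E3 ≃ₗᵢ[ℝ] E3) (b : E3),
      q₁ = r • R (v3 0 0 1) + b ∧
      q₂ = r • R (v3 1 0 0) + b ∧
      q₃ = r • R (v3 0 1 0) + b ∧
      q₄ = r • R (v3 (-1) 0 0) + b ∧
      q₅ = r • R (v3 0 (-1) 0) + b ∧
      q₆ = r • R (v3 0 0 (-1)) + b := by
  rw [nu4_reverse] at h₄ h₅ h₆
  rw [nu4_eq_cross] at h₁ h₂ h₃ h₄ h₅ h₆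
  have hμ : 3 * lam ≠ 0 := mul_ne_zero three_ne_zero hlam
  have hvw : cross (q₂ - q₄) (q₃ - q₅) = (3 * lam) • (q₁ - q₆) := by
    linear_combination (norm := module) (3 : ℝ) • h₁ - (3 : ℝ) • h₆
  have hwu : cross (q₃ - q₅) (q₁ - q₆) = (3 * lam) • (q₂ - q₄) := by
    rw [cross_swap, ← cross_neg_right, neg_sub]
    linear_combination (norm := module) (3 : ℝ) • h₂ - (3 : ℝ) • h₄
  have huv : cross (q₁ - q₆) (q₂ - q₄) = (3 * lam) • (q₃ - q₅) := by
    linear_combination (norm := module) (3 : ℝ) • h₃ - (3 : ℝ) • h₅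
  have h₂₄ : q₂ + q₄ = q₁ + q₆ := smul_right_injective E3 hlam <| by
    linear_combination (norm := module) h₁ + h₆ - h₂ - h₄
  have h₃₅ : q₃ + q₅ = q₁ + q₆ := smul_right_injective E3 hlam <| by
    linear_combination (norm := module) h₁ + h₆ - h₃ - h₅
  have hu : q₁ - q₆ ≠ 0 := by
    intro hu
    obtain ⟨hv, hw⟩ := eq_zero_of_cross_cyclic hμ hwu huv hu
    refine hne ⟨?_, ?_, ?_, ?_, ?_⟩
    · linear_combination (norm := module) (2⁻¹ : ℝ) • (hu - hv - h₂₄)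
    · linear_combination (norm := module) (2⁻¹ : ℝ) • (hu - hw - h₃₅)
    · linear_combination (norm := module) (2⁻¹ : ℝ) • (hu + hv - h₂₄)
    · linear_combination (norm := module) (2⁻¹ : ℝ) • (hu + hw - h₃₅)
    · linear_combination (norm := module) hu
  exact exists_regular_octahedron_of_diagonals (inv_pos.2 (abs_pos.2 hμ)) h₂₄ h₃₅
    (orthonormal_of_cross_cyclic hμ hvw hwu huv hu)
end
end
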